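/- arXiv:1207.4733 — 2 statements merged into one kernel-verified Lean document; each statement's English description precedes it below -/
import Mathlib

section
/- For every ε > 0, the adiabatic time satisfies t_ad(P₀, P₁, ε) ≤ 2 · t_mix(P₁, ε/2)² / ε. -/
open Matrix BigOperators

/-- A row-stochastic matrix: nonnegative entries, each row sums to 1. -/
def IsStochastic {n : ℕ} (P : Matrix (Fin n) (Fin n) ℝ) : Prop :=
  (∀ i j, 0 ≤ P i j) ∧ ∀ i, ∑ j, P i j = 1

/-- Irreducibility: every state can reach every other state. -/
def MCIrreducible {n : ℕ} (P : Matrix (Fin n) (Fin n) ℝ) : Prop :=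
  ∀ i j, ∃ m : ℕ, 0 < (P ^ m) i j

/-- Aperiodicity (for a finite chain): every state has eventually positive return
probabilities. -/
def MCAperiodic {n : ℕ} (P : Matrix (Fin n) (Fin n) ℝ) : Prop :=
  ∀ i : Fin n, ∃ N : ℕ, ∀ m : ℕ, N ≤ m → 0 < (P ^ m) i i

/-- A probability (row) vector. -/
def IsProbVec {n : ℕ} (v : Fin n → ℝ) : Prop :=
  (∀ i, 0 ≤ v i) ∧ ∑ i, v i = 1

/-- Total variation distance between two vectors. -/
noncomputable def tvDist {n : ℕ} (μ ν : Fin n → ℝ) : ℝ :=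
  (1 / 2) * ∑ i, |μ i - ν i|

/-- Euclidean norm on ℝⁿ. -/
noncomputable def euclNorm {n : ℕ} (v : Fin n → ℝ) : ℝ :=
  Real.sqrt (∑ i, (v i) ^ 2)

/-- Mixing time of `P` with stationary distribution `π`. -/
noncomputable def mixingTime {n : ℕ} (P : Matrix (Fin n) (Fin n) ℝ)
    (π : Fin n → ℝ) (ε : ℝ) : ℕ :=
  sInf {T : ℕ | ∀ ν : Fin n → ℝ, IsProbVec ν → tvDist (ν ᵥ* (P ^ T)) π ≤ ε}

/-- The interpolation `P_t = (1-t)·P₀ + t·P₁`. -/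
noncomputable def Pt {n : ℕ} (P₀ P₁ : Matrix (Fin n) (Fin n) ℝ) (t : ℝ) :
    Matrix (Fin n) (Fin n) ℝ :=
  (1 - t) • P₀ + t • P₁

/-- The ordered product `P_{(j+1)/T} P_{(j+2)/T} ⋯ P_{k/T}` (identity if `j ≥ k`). -/
noncomputable def prodSeg {n : ℕ} (P₀ P₁ : Matrix (Fin n) (Fin n) ℝ) (T j k : ℕ) :
    Matrix (Fin n) (Fin n) ℝ :=
  ((List.range (k - j)).map (fun i => Pt P₀ P₁ (((j : ℝ) + (i : ℝ) + 1) / (T : ℝ)))).prod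

/-- The ordered product `P_{1/T} P_{2/T} ⋯ P_{k/T}`. -/
noncomputable def adiabProd {n : ℕ} (P₀ P₁ : Matrix (Fin n) (Fin n) ℝ) (T k : ℕ) :
    Matrix (Fin n) (Fin n) ℝ :=
  prodSeg P₀ P₁ T 0 k

/-- Adiabatic time of the adiabatic evolution between `P₀` and `P₁`,
with `π₁` the stationary distribution of `P₁`. -/
noncomputable def adiabaticTime {n : ℕ} (P₀ P₁ : Matrix (Fin n) (Fin n) ℝ)
    (π₁ : Fin n → ℝ) (ε : ℝ) : ℕ :=
  sInf {T' : ℕ | ∀ T : ℕ, T' ≤ T → ∀ ν : Fin n → ℝ, IsProbVec ν →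
    tvDist ((ν ᵥ* P₀) ᵥ* adiabProd P₀ P₁ T T) π₁ ≤ ε}

/-- Stable adiabatic time, where `π s` is the stationary distribution of `P_s`. -/
noncomputable def stableAdiabaticTime {n : ℕ} (P₀ P₁ : Matrix (Fin n) (Fin n) ℝ)
    (π : ℝ → Fin n → ℝ) (ε : ℝ) : ℕ :=
  sInf {T : ℕ | ∀ k : ℕ, 1 ≤ k → k ≤ T →
    tvDist ((π 0) ᵥ* adiabProd P₀ P₁ T k) (π ((k : ℝ) / (T : ℝ))) < ε}

/-- `t_mix(ε) = sup_{s ∈ [0,1]} t_mix(P_s, ε)`, where `π s` is the stationary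
distribution of `P_s`. -/
noncomputable def maxMixingTime {n : ℕ} (P₀ P₁ : Matrix (Fin n) (Fin n) ℝ)
    (π : ℝ → Fin n → ℝ) (ε : ℝ) : ℕ :=
  sSup {m : ℕ | ∃ s ∈ Set.Icc (0 : ℝ) 1, m = mixingTime (Pt P₀ P₁ s) (π s) ε}

/-- `s` is a singular value of `A`: `s ≥ 0` and `s²` is an eigenvalue of `A Aᵀ`
(for a left eigenvector). -/
def IsSingularValue {n : ℕ} (A : Matrix (Fin n) (Fin n) ℝ) (s : ℝ) : Prop :=
  0 ≤ s ∧ ∃ v : Fin n → ℝ, v ≠ 0 ∧ v ᵥ* (A * Aᵀ) = (s ^ 2) • v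

/-- `σ` is the smallest nonzero (positive) singular value of `A`. -/
def IsSmallestPosSingularValue {n : ℕ} (A : Matrix (Fin n) (Fin n) ℝ) (σ : ℝ) : Prop :=
  0 < σ ∧ IsSingularValue A σ ∧ ∀ s : ℝ, 0 < s → IsSingularValue A s → σ ≤ s

/-!
Let `M = t_mix(P₁, ε/2)` and `T ≥ 2M²/ε`. Split the product `P₀ P_{1/T} ⋯ P_{T/T}` before its
last `M` factors `P_{1 - k/T}`, `k = M-1, …, 0`. On probability vectors each of them is within
`k/T` of `P₁` in total variation, and `P₁` does not increase total variation, so the last `M`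
factors differ from `P₁^M` by at most `M(M-1)/(2T) ≤ ε/2`; and `P₁^M` brings every distribution
within `ε/2` of `π₁`.

That the infimum defining `t_mix(P₁, ε/2)` is over a nonempty set (so is not the junk value
`sInf ∅ = 0`) is Dobrushin's contraction: by irreducibility and
aperiodicity some power of `P₁` has all entries `≥ δ > 0`, and such a matrix shrinks the total
variation distance between probability vectors by the factor `1 - nδ`.
-/

open Finset

namespace AdiabaticTime

variable {n : ℕ}

section Stochastic

variable {P P₀ P₁ : Matrix (Fin n) (Fin n) ℝ}

lemma isStochastic_iff_mem_rowStochastic : IsStochastic P ↔ P ∈ rowStochastic ℝ (Fin n) :=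
  mem_rowStochastic_iff_sum.symm

lemma sum_vecMul_of_mem_rowStochastic (hP : P ∈ rowStochastic ℝ (Fin n)) (x : Fin n → ℝ) :
    ∑ j, (x ᵥ* P) j = ∑ i, x i := by
  rw [← dotProduct_one, ← dotProduct_one, ← dotProduct_mulVec,
    one_vecMul_of_mem_rowStochastic hP]

lemma _root_.IsProbVec.vecMul {x : Fin n → ℝ} (hx : IsProbVec x)
    (hP : P ∈ rowStochastic ℝ (Fin n)) : IsProbVec (x ᵥ* P) :=
  ⟨nonneg_vecMul_of_mem_rowStochastic hP hx.1, by rw [sum_vecMul_of_mem_rowStochastic hP, hx.2]⟩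

lemma _root_.IsProbVec.nonempty {x : Fin n → ℝ} (hx : IsProbVec x) : Nonempty (Fin n) := by
  by_contra h
  rw [not_nonempty_iff] at h
  simpa using hx.2

lemma Pt_mem_rowStochastic (hP₀ : P₀ ∈ rowStochastic ℝ (Fin n))
    (hP₁ : P₁ ∈ rowStochastic ℝ (Fin n)) {t : ℝ} (ht₀ : 0 ≤ t) (ht₁ : t ≤ 1) :
    Pt P₀ P₁ t ∈ rowStochastic ℝ (Fin n) :=
  convex_rowStochastic hP₀ hP₁ (sub_nonneg.2 ht₁) ht₀ (sub_add_cancel 1 t)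

lemma prodSeg_eq (P₀ P₁ : Matrix (Fin n) (Fin n) ℝ) (T j k : ℕ) :
    prodSeg P₀ P₁ T j k = ((List.range (k - j)).map
      (fun i : ℕ => Pt P₀ P₁ (((j : ℝ) + (i : ℝ) + 1) / (T : ℝ)))).prod := by
  have hcast : (do let a ← List.range (k - j); pure (a : ℝ) : List ℝ) =
      (List.range (k - j)).map (↑) := List.flatMap_pure_eq_map _ _
  rw [prodSeg, hcast, List.map_map]
  rfl

lemma prodSeg_mul_prodSeg (P₀ P₁ : Matrix (Fin n) (Fin n) ℝ) (T : ℕ) {i j k : ℕ}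
    (hij : i ≤ j) (hjk : j ≤ k) :
    prodSeg P₀ P₁ T i j * prodSeg P₀ P₁ T j k = prodSeg P₀ P₁ T i k := by
  rw [prodSeg_eq, prodSeg_eq, prodSeg_eq, show k - i = (j - i) + (k - j) by omega,
    List.range_add, List.map_append, List.prod_append, List.map_map]
  congr 3
  ext l : 1
  simp only [Function.comp_apply]
  push_cast [Nat.cast_sub hij]
  ring_nf

lemma prodSeg_mem_rowStochastic (hP₀ : P₀ ∈ rowStochastic ℝ (Fin n))
    (hP₁ : P₁ ∈ rowStochastic ℝ (Fin n)) {T j k : ℕ} (hkT : k ≤ T) :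
    prodSeg P₀ P₁ T j k ∈ rowStochastic ℝ (Fin n) := by
  rw [prodSeg_eq]
  refine Submonoid.list_prod_mem _ fun A hA => ?_
  obtain ⟨i, hi, rfl⟩ := List.mem_map.1 hA
  have hi : j + i + 1 ≤ T := by rw [List.mem_range] at hi; omega
  refine Pt_mem_rowStochastic hP₀ hP₁ (by positivity) (div_le_one_of_le₀ ?_ (Nat.cast_nonneg T))
  exact_mod_cast hi

end Stochastic

section TotalVariation

lemma tvDist_triangle (a b c : Fin n → ℝ) : tvDist a c ≤ tvDist a b + tvDist b c := by
  unfold tvDist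
  rw [← mul_add, ← sum_add_distrib]
  gcongr with i
  exact abs_sub_le _ _ _

lemma tvDist_le_one {a b : Fin n → ℝ} (ha : IsProbVec a) (hb : IsProbVec b) :
    tvDist a b ≤ 1 := by
  have h : ∑ i, |a i - b i| ≤ ∑ i, (a i + b i) :=
    sum_le_sum fun i _ => (abs_sub _ _).trans_eq (by rw [abs_of_nonneg (ha.1 i),
      abs_of_nonneg (hb.1 i)])
  rw [sum_add_distrib, ha.2, hb.2] at h
  unfold tvDist
  linarith

variable {Q : Matrix (Fin n) (Fin n) ℝ}

lemma card_mul_le_one_of_forall_le (hQ : Q ∈ rowStochastic ℝ (Fin n)) {δ : ℝ}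
    (hδ : ∀ i j, δ ≤ Q i j) : (n : ℝ) * δ ≤ 1 := by
  rcases Nat.eq_zero_or_pos n with rfl | hn
  · simp
  · calc (n : ℝ) * δ = ∑ _j : Fin n, δ := by simp
      _ ≤ ∑ j, Q ⟨0, hn⟩ j := sum_le_sum fun j _ => hδ _ j
      _ = 1 := sum_row_of_mem_rowStochastic hQ _

lemma tvDist_vecMul_le_mul (hQ : Q ∈ rowStochastic ℝ (Fin n)) {δ : ℝ} (hδ : ∀ i j, δ ≤ Q i j)
    {x y : Fin n → ℝ} (hxy : ∑ i, x i = ∑ i, y i) :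
    tvDist (x ᵥ* Q) (y ᵥ* Q) ≤ (1 - n * δ) * tvDist x y := by
  have hdiff : ∀ j, (x ᵥ* Q) j - (y ᵥ* Q) j = ∑ i, (x i - y i) * (Q i j - δ) := fun j => by
    simp only [vecMul, dotProduct, mul_sub, sub_mul, sum_sub_distrib, ← sum_mul, hxy]
    ring
  have hrow : ∀ i, ∑ j, (Q i j - δ) = 1 - n * δ := fun i => by
    simp [sum_sub_distrib, sum_row_of_mem_rowStochastic hQ i]
  unfold tvDist
  calc 1 / 2 * ∑ j, |(x ᵥ* Q) j - (y ᵥ* Q) j|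
      ≤ 1 / 2 * ∑ j, ∑ i, |x i - y i| * (Q i j - δ) := by
        gcongr with j
        rw [hdiff]
        refine (abs_sum_le_sum_abs _ _).trans_eq (sum_congr rfl fun i _ => ?_)
        rw [abs_mul, abs_of_nonneg (sub_nonneg.2 (hδ i j))]
    _ = (1 - n * δ) * (1 / 2 * ∑ i, |x i - y i|) := by
        rw [sum_comm]
        simp only [← mul_sum, hrow, ← sum_mul]
        ring

lemma tvDist_vecMul_pow_le (hQ : Q ∈ rowStochastic ℝ (Fin n)) {δ : ℝ} (hδ : ∀ i j, δ ≤ Q i j)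
    {x y : Fin n → ℝ} (hxy : ∑ i, x i = ∑ i, y i) (k : ℕ) :
    tvDist (x ᵥ* Q ^ k) (y ᵥ* Q ^ k) ≤ (1 - n * δ) ^ k * tvDist x y := by
  induction k with
  | zero => simp
  | succ k ih =>
    have hsum : ∑ i, (x ᵥ* Q ^ k) i = ∑ i, (y ᵥ* Q ^ k) i := by
      rw [sum_vecMul_of_mem_rowStochastic (pow_mem hQ k), hxy,
        sum_vecMul_of_mem_rowStochastic (pow_mem hQ k)]
    rw [pow_succ, ← vecMul_vecMul, ← vecMul_vecMul, pow_succ, mul_comm _ (1 - _), mul_assoc]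
    exact (tvDist_vecMul_le_mul hQ hδ hsum).trans
      (mul_le_mul_of_nonneg_left ih (sub_nonneg.2 (card_mul_le_one_of_forall_le hQ hδ)))

lemma tvDist_vecMul_le (hQ : Q ∈ rowStochastic ℝ (Fin n)) {x y : Fin n → ℝ}
    (hx : IsProbVec x) (hy : IsProbVec y) : tvDist (x ᵥ* Q) (y ᵥ* Q) ≤ tvDist x y := by
  simpa using tvDist_vecMul_le_mul hQ (δ := 0) (fun i j => hQ.1 i j) (hx.2.trans hy.2.symm)

end TotalVariation

section Mixing

variable {P : Matrix (Fin n) (Fin n) ℝ}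

lemma vecMul_pow_eq_self {π : Fin n → ℝ} (hstat : π ᵥ* P = π) (k : ℕ) : π ᵥ* P ^ k = π := by
  induction k with
  | zero => simp
  | succ k ih => rw [pow_succ, ← vecMul_vecMul, ih, hstat]

lemma pow_apply_mul_pow_apply_le (hP : P ∈ rowStochastic ℝ (Fin n)) (a b : ℕ) (i k j : Fin n) :
    (P ^ a) i k * (P ^ b) k j ≤ (P ^ (a + b)) i j := by
  rw [pow_add, mul_apply]
  exact single_le_sum (f := fun k => (P ^ a) i k * (P ^ b) k j)
    (fun k _ => mul_nonneg ((pow_mem hP a).1 i k) ((pow_mem hP b).1 k j)) (mem_univ k)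

lemma exists_forall_pow_apply_pos (hP : P ∈ rowStochastic ℝ (Fin n)) (hirr : MCIrreducible P)
    (hap : MCAperiodic P) : ∃ m : ℕ, ∀ i j, 0 < (P ^ m) i j := by
  choose N hN using hap
  choose L hL using hirr
  set m := univ.sup fun p : Fin n × Fin n => N p.1 + L p.1 p.2
  refine ⟨m, fun i j => ?_⟩
  have hm : N i + L i j ≤ m := le_sup (f := fun p : Fin n × Fin n => N p.1 + L p.1 p.2)
    (mem_univ (i, j))
  calc 0 < (P ^ (m - L i j)) i i * (P ^ L i j) i j := mul_pos (hN i _ (by omega)) (hL i j)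
    _ ≤ (P ^ (m - L i j + L i j)) i j := pow_apply_mul_pow_apply_le hP _ _ i i j
    _ = (P ^ m) i j := by rw [Nat.sub_add_cancel (by omega)]

lemma exists_forall_tvDist_vecMul_pow_le (hP : P ∈ rowStochastic ℝ (Fin n)) {m : ℕ}
    (hpos : ∀ i j, 0 < (P ^ m) i j) {π : Fin n → ℝ} (hπ : IsProbVec π) (hstat : π ᵥ* P = π)
    {ε : ℝ} (hε : 0 < ε) :
    ∃ T : ℕ, ∀ ν : Fin n → ℝ, IsProbVec ν → tvDist (ν ᵥ* P ^ T) π ≤ ε := by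
  have := hπ.nonempty
  obtain ⟨⟨i₀, j₀⟩, hmin⟩ := Finite.exists_min fun p : Fin n × Fin n => (P ^ m) p.1 p.2
  have hn : (0 : ℝ) < n := by exact_mod_cast Fin.pos i₀
  obtain ⟨k, hk⟩ := exists_pow_lt_of_lt_one hε
    (sub_lt_self 1 (mul_pos hn (hpos i₀ j₀)) : 1 - n * (P ^ m) i₀ j₀ < 1)
  refine ⟨m * k, fun ν hν => ?_⟩
  calc tvDist (ν ᵥ* P ^ (m * k)) π = tvDist (ν ᵥ* (P ^ m) ^ k) (π ᵥ* (P ^ m) ^ k) := by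
        rw [← pow_mul, vecMul_pow_eq_self hstat]
    _ ≤ (1 - n * (P ^ m) i₀ j₀) ^ k * tvDist ν π :=
        tvDist_vecMul_pow_le (pow_mem hP m) (fun i j => hmin (i, j)) (hν.2.trans hπ.2.symm) k
    _ ≤ (1 - n * (P ^ m) i₀ j₀) ^ k * 1 :=
        mul_le_mul_of_nonneg_left (tvDist_le_one hν hπ) (pow_nonneg (sub_nonneg.2
          (card_mul_le_one_of_forall_le (pow_mem hP m) fun i j => hmin (i, j))) k)
    _ ≤ ε := (mul_one _).trans_le hk.le

lemma tvDist_vecMul_pow_mixingTime_le (hP : P ∈ rowStochastic ℝ (Fin n))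
    (hirr : MCIrreducible P) (hap : MCAperiodic P) {π : Fin n → ℝ} (hπ : IsProbVec π)
    (hstat : π ᵥ* P = π) {ε : ℝ} (hε : 0 < ε) {ν : Fin n → ℝ} (hν : IsProbVec ν) :
    tvDist (ν ᵥ* P ^ mixingTime P π ε) π ≤ ε := by
  obtain ⟨m, hm⟩ := exists_forall_pow_apply_pos hP hirr hap
  exact Nat.sInf_mem (exists_forall_tvDist_vecMul_pow_le hP hm hπ hstat hε) ν hν

end Mixing

section Adiabatic

variable {P₀ P₁ Q : Matrix (Fin n) (Fin n) ℝ}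

lemma tvDist_vecMul_Pt (x : Fin n → ℝ) (t : ℝ) :
    tvDist (x ᵥ* Pt P₀ P₁ t) (x ᵥ* P₁) = |1 - t| * tvDist (x ᵥ* P₀) (x ᵥ* P₁) := by
  have h : ∀ j, (x ᵥ* Pt P₀ P₁ t) j - (x ᵥ* P₁) j = (1 - t) * ((x ᵥ* P₀) j - (x ᵥ* P₁) j) :=
    fun j => by
      simp only [Pt, vecMul_add, vecMul_smul, Pi.add_apply, Pi.smul_apply, smul_eq_mul]
      ring
  simp only [tvDist, h, abs_mul, ← mul_sum]
  ring

lemma tvDist_vecMul_Pt_le (hP₀ : P₀ ∈ rowStochastic ℝ (Fin n))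
    (hP₁ : P₁ ∈ rowStochastic ℝ (Fin n)) {t : ℝ} (ht : t ≤ 1) {x : Fin n → ℝ}
    (hx : IsProbVec x) : tvDist (x ᵥ* Pt P₀ P₁ t) (x ᵥ* P₁) ≤ 1 - t := by
  rw [tvDist_vecMul_Pt, abs_of_nonneg (sub_nonneg.2 ht)]
  exact mul_le_of_le_one_right (sub_nonneg.2 ht)
    (tvDist_le_one (hx.vecMul hP₀) (hx.vecMul hP₁))

lemma tvDist_vecMul_prod_map_range_le (hQ : Q ∈ rowStochastic ℝ (Fin n))
    {f : ℕ → Matrix (Fin n) (Fin n) ℝ} {c : ℕ → ℝ} {m : ℕ}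
    (hf : ∀ i < m, f i ∈ rowStochastic ℝ (Fin n))
    (hfQ : ∀ i < m, ∀ ρ : Fin n → ℝ, IsProbVec ρ → tvDist (ρ ᵥ* f i) (ρ ᵥ* Q) ≤ c i)
    {μ : Fin n → ℝ} (hμ : IsProbVec μ) :
    tvDist (μ ᵥ* ((List.range m).map f).prod) (μ ᵥ* Q ^ m) ≤ ∑ i ∈ range m, c i := by
  induction m with
  | zero => simp [tvDist]
  | succ m ih =>
    set A := ((List.range m).map f).prod
    have hA : A ∈ rowStochastic ℝ (Fin n) := Submonoid.list_prod_mem _ fun B hB => by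
      obtain ⟨i, hi, rfl⟩ := List.mem_map.1 hB
      exact hf i (by rw [List.mem_range] at hi; omega)
    have hμA := hμ.vecMul hA
    rw [List.range_succ, List.map_append, List.prod_append, List.map_singleton,
      List.prod_singleton, pow_succ, ← vecMul_vecMul, ← vecMul_vecMul, sum_range_succ]
    calc tvDist ((μ ᵥ* A) ᵥ* f m) ((μ ᵥ* Q ^ m) ᵥ* Q)
        ≤ tvDist ((μ ᵥ* A) ᵥ* f m) ((μ ᵥ* A) ᵥ* Q) + tvDist ((μ ᵥ* A) ᵥ* Q) ((μ ᵥ* Q ^ m) ᵥ* Q) :=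
          tvDist_triangle _ _ _
      _ ≤ c m + tvDist (μ ᵥ* A) (μ ᵥ* Q ^ m) :=
          add_le_add (hfQ m m.lt_succ_self _ hμA)
            (tvDist_vecMul_le hQ hμA (hμ.vecMul (pow_mem hQ m)))
      _ ≤ c m + ∑ i ∈ range m, c i :=
          add_le_add_right (ih (fun i hi => hf i (by omega)) (fun i hi => hfQ i (by omega))) _
      _ = ∑ i ∈ range m, c i + c m := add_comm _ _

lemma sum_range_sub_one_sub (M : ℕ) : ∑ i ∈ range M, ((M : ℝ) - 1 - i) = M * (M - 1) / 2 := by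
  induction M with
  | zero => simp
  | succ M ih =>
    have hshift : ∀ k : ℕ, ((M + 1 : ℕ) : ℝ) - 1 - ((k + 1 : ℕ) : ℝ) = (M : ℝ) - 1 - k :=
      fun k => by push_cast; ring
    rw [sum_range_succ']
    simp only [hshift, ih]
    push_cast
    ring

lemma tvDist_vecMul_prodSeg_sub_le (hP₀ : P₀ ∈ rowStochastic ℝ (Fin n))
    (hP₁ : P₁ ∈ rowStochastic ℝ (Fin n)) {M T : ℕ} (hMT : M ≤ T) {μ : Fin n → ℝ}
    (hμ : IsProbVec μ) :
    tvDist (μ ᵥ* prodSeg P₀ P₁ T (T - M) T) (μ ᵥ* P₁ ^ M) ≤ M * (M - 1) / (2 * T) := by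
  rw [prodSeg_eq, Nat.sub_sub_self hMT]
  have hT : ∀ i < M, (0 : ℝ) < T := fun i hi => by exact_mod_cast (show 0 < T by omega)
  have ht : ∀ i < M, 1 - (((T - M : ℕ) : ℝ) + i + 1) / T = (M - 1 - i) / T := fun i hi => by
    have := hT i hi
    rw [Nat.cast_sub hMT]
    field_simp
    ring
  have ht₁ : ∀ i < M, (((T - M : ℕ) : ℝ) + i + 1) / T ≤ 1 := fun i hi => by
    have hi' : (i : ℝ) + 1 ≤ M := by exact_mod_cast hi
    have := div_nonneg (by linarith : (0 : ℝ) ≤ M - 1 - i) (hT i hi).le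
    linarith [ht i hi]
  calc _ ≤ ∑ i ∈ range M, ((M : ℝ) - 1 - i) / T :=
        tvDist_vecMul_prod_map_range_le hP₁
          (fun i hi => Pt_mem_rowStochastic hP₀ hP₁ (by positivity) (ht₁ i hi))
          (fun i hi ρ hρ => ht i hi ▸ tvDist_vecMul_Pt_le hP₀ hP₁ (ht₁ i hi) hρ) hμ
    _ = M * (M - 1) / (2 * T) := by
        rw [← sum_div, sum_range_sub_one_sub, div_div]

lemma tvDist_vecMul_adiabProd_le (hP₀ : P₀ ∈ rowStochastic ℝ (Fin n))
    (hP₁ : P₁ ∈ rowStochastic ℝ (Fin n)) {π : Fin n → ℝ} {δ : ℝ} {M T : ℕ}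
    (hmix : ∀ ν : Fin n → ℝ, IsProbVec ν → tvDist (ν ᵥ* P₁ ^ M) π ≤ δ) (hMT : M ≤ T)
    {ν : Fin n → ℝ} (hν : IsProbVec ν) :
    tvDist (ν ᵥ* adiabProd P₀ P₁ T T) π ≤ M * (M - 1) / (2 * T) + δ := by
  set μ := ν ᵥ* adiabProd P₀ P₁ T (T - M)
  have hμ : IsProbVec μ := hν.vecMul (prodSeg_mem_rowStochastic hP₀ hP₁ (Nat.sub_le T M))
  rw [adiabProd, ← prodSeg_mul_prodSeg P₀ P₁ T (Nat.zero_le _) (Nat.sub_le T M), ← vecMul_vecMul]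
  calc tvDist (μ ᵥ* prodSeg P₀ P₁ T (T - M) T) π
      ≤ tvDist (μ ᵥ* prodSeg P₀ P₁ T (T - M) T) (μ ᵥ* P₁ ^ M) + tvDist (μ ᵥ* P₁ ^ M) π :=
        tvDist_triangle _ _ _
    _ ≤ M * (M - 1) / (2 * T) + δ :=
        add_le_add (tvDist_vecMul_prodSeg_sub_le hP₀ hP₁ hMT hμ) (hmix μ hμ)

end Adiabatic

lemma le_of_floor_two_mul_sq_div_le {M T : ℕ} {ε : ℝ} (hε : 0 < ε) (hε₂ : ε ≤ 2)
    (hT : ⌊2 * (M : ℝ) ^ 2 / ε⌋₊ ≤ T) : M ≤ T := by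
  refine le_trans (Nat.le_floor ?_) hT
  rw [le_div_iff₀ hε]
  rcases Nat.eq_zero_or_pos M with rfl | hM
  · simp
  · have : (1 : ℝ) ≤ M := by exact_mod_cast hM
    nlinarith

lemma mul_sub_one_div_le_of_floor_two_mul_sq_div_le {M T : ℕ} {ε : ℝ} (hε : 0 < ε)
    (hε₂ : ε ≤ 2) (hT : ⌊2 * (M : ℝ) ^ 2 / ε⌋₊ ≤ T) : M * (M - 1) / (2 * T) ≤ ε / 2 := by
  rcases Nat.eq_zero_or_pos M with rfl | hM
  · simpa using (half_pos hε).le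
  have hM' : (1 : ℝ) ≤ M := by exact_mod_cast hM
  have hT' : (0 : ℝ) < T := by
    exact_mod_cast hM.trans_le (le_of_floor_two_mul_sq_div_le hε hε₂ hT)
  have hlt : 2 * (M : ℝ) ^ 2 < (T + 1) * ε := by
    rw [← div_lt_iff₀ hε]
    exact (Nat.lt_floor_add_one _).trans_le (by exact_mod_cast Nat.add_le_add_right hT 1)
  rw [div_le_div_iff₀ (by positivity) two_pos]
  nlinarith

end AdiabaticTime

open AdiabaticTime

theorem stmt_0_general {n : ℕ} (P₀ P₁ : Matrix (Fin n) (Fin n) ℝ)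
    (hP₀ : IsStochastic P₀)
    (hP₁ : IsStochastic P₁) (hP₁i : MCIrreducible P₁) (hP₁a : MCAperiodic P₁)
    (π₁ : Fin n → ℝ) (hπ₁ : IsProbVec π₁) (hπ₁stat : π₁ ᵥ* P₁ = π₁)
    (ε : ℝ) (hε : 0 < ε) :
    (adiabaticTime P₀ P₁ π₁ ε : ℝ) ≤ 2 * (mixingTime P₁ π₁ (ε / 2) : ℝ) ^ 2 / ε := by
  rw [isStochastic_iff_mem_rowStochastic] at hP₀ hP₁
  rcases lt_or_ge 2 ε with hε₂ | hε₂
  · have h0 : adiabaticTime P₀ P₁ π₁ ε = 0 := Nat.sInf_eq_zero.2 <| Or.inl fun T _ ν hν =>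
      have hρ := (hν.vecMul hP₀).vecMul (prodSeg_mem_rowStochastic hP₀ hP₁ le_rfl)
      (tvDist_le_one hρ hπ₁).trans (by linarith)
    rw [h0, Nat.cast_zero]
    positivity
  set M := mixingTime P₁ π₁ (ε / 2)
  refine (Nat.cast_le.2 (Nat.sInf_le fun T hT ν hν => ?_)).trans (Nat.floor_le (by positivity))
  calc tvDist ((ν ᵥ* P₀) ᵥ* adiabProd P₀ P₁ T T) π₁ ≤ M * (M - 1) / (2 * T) + ε / 2 :=
        tvDist_vecMul_adiabProd_le hP₀ hP₁
          (fun μ hμ => tvDist_vecMul_pow_mixingTime_le hP₁ hP₁i hP₁a hπ₁ hπ₁stat (half_pos hε) hμ)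
          (le_of_floor_two_mul_sq_div_le hε hε₂ hT) (hν.vecMul hP₀)
    _ ≤ ε := by linarith [mul_sub_one_div_le_of_floor_two_mul_sq_div_le hε hε₂ hT]

/-- For every ε > 0, `t_ad(P₀, P₁, ε) ≤ 2 · t_mix(P₁, ε/2)² / ε`. -/
theorem stmt_0 {n : ℕ} (hn : 1 ≤ n) (P₀ P₁ : Matrix (Fin n) (Fin n) ℝ)
    (hP₀ : IsStochastic P₀) (hP₀i : MCIrreducible P₀) (hP₀a : MCAperiodic P₀)
    (hP₁ : IsStochastic P₁) (hP₁i : MCIrreducible P₁) (hP₁a : MCAperiodic P₁)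
    (π₁ : Fin n → ℝ) (hπ₁ : IsProbVec π₁) (hπ₁stat : π₁ ᵥ* P₁ = π₁)
    (ε : ℝ) (hε : 0 < ε) :
    (adiabaticTime P₀ P₁ π₁ ε : ℝ) ≤ 2 * (mixingTime P₁ π₁ (ε / 2) : ℝ) ^ 2 / ε :=
  stmt_0_general P₀ P₁ hP₀ hP₁ hP₁i hP₁a π₁ hπ₁ hπ₁stat ε hε
end

section
/- Let σ be the smallest nonzero singular value of I − P₀. For every ε > 0, if δ = ε·σ/(2 n^{3/2}), then for every s ∈ [0,1] with s ≤ δ one has ‖π_s − π₀‖_TV ≤ ε. In particular, s ↦ π_s is continuous at s = 0 with respect to the total variation norm. -/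
open Matrix BigOperators

/-!
Put `A = 1 - P₀` and `v = π_s - π₀`. Stationarity gives `v A = s (π_s P₁ - π_s P₀)`, a vector of
ℓ¹ norm at most `2 s`. Irreducibility makes the right kernel of `A` the constants, and the left
kernel has the same dimension, so it is spanned by `π₀`. Split `v = c π₀ + z` with `z` orthogonal
to that kernel: the smallest positive singular value gives `σ ‖z‖ ≤ ‖z A‖ = ‖v A‖`, and `∑ v = 0`
forces `c = -∑ z`, so `|c| ≤ √n ‖z‖`. Comparing ℓ¹ and ℓ² norms on both ends yields
`‖π_s - π₀‖_TV ≤ (n + √n) s / σ`, which is at most `ε` once `s ≤ ε σ / (2 n^{3/2})`.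
-/

open Module LinearMap InnerProductSpace Submodule

section Stochastic

variable {n : ℕ} {P : Matrix (Fin n) (Fin n) ℝ}

theorem IsStochastic.mem_rowStochastic (hP : IsStochastic P) : P ∈ rowStochastic ℝ (Fin n) :=
  mem_rowStochastic_iff_sum.2 hP

theorem IsProbVec.vecMul_s7 {μ : Fin n → ℝ} (hμ : IsProbVec μ) (hP : IsStochastic P) :
    IsProbVec (μ ᵥ* P) := by
  refine ⟨nonneg_vecMul_of_mem_rowStochastic hP.mem_rowStochastic hμ.1, ?_⟩
  rw [← dotProduct_one, vecMul_dotProduct_one_eq_one_rowStochastic hP.mem_rowStochastic]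
  rw [dotProduct_one, hμ.2]

theorem IsStochastic.eq_const_of_mulVec_eq_self (hP : IsStochastic P) (hirr : MCIrreducible P)
    {x : Fin n → ℝ} (hx : P *ᵥ x = x) : ∃ c : ℝ, x = fun _ => c := by
  rcases isEmpty_or_nonempty (Fin n) with _ | _
  · exact ⟨0, funext isEmptyElim⟩
  obtain ⟨i₀, hmax⟩ := Finite.exists_max x
  refine ⟨x i₀, funext fun j => le_antisymm (hmax j) ?_⟩
  have hxm : ∀ m : ℕ, (P ^ m) *ᵥ x = x := fun m => by
    induction m with
    | zero => simp
    | succ m ih => rw [pow_succ, ← mulVec_mulVec, hx, ih]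
  obtain ⟨m, hm⟩ := hirr i₀ j
  have hPm := pow_mem hP.mem_rowStochastic m
  -- `x i₀` is a weighted average of values `≤ x i₀`, with positive weight on `x j`
  have hsum : ∑ k, (P ^ m) i₀ k * (x i₀ - x k) = 0 := by
    simp only [mul_sub, Finset.sum_sub_distrib, ← Finset.sum_mul,
      sum_row_of_mem_rowStochastic hPm, one_mul]
    exact sub_eq_zero.2 (congrFun (hxm m) i₀).symm
  have hterm := (Finset.sum_eq_zero_iff_of_nonneg fun k _ =>
    mul_nonneg (hPm.1 i₀ k) (sub_nonneg.2 (hmax k))).1 hsum j (Finset.mem_univ j)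
  nlinarith [(mul_eq_zero.1 hterm).resolve_left hm.ne']

end Stochastic

section Euclidean

variable {ι : Type*} [Fintype ι]

theorem EuclideanSpace.norm_le_sum_abs (x : EuclideanSpace ℝ ι) : ‖x‖ ≤ ∑ i, |x i| := by
  rw [EuclideanSpace.norm_eq, Real.sqrt_le_iff]
  refine ⟨by positivity, ?_⟩
  simpa only [Real.norm_eq_abs] using
    Finset.sum_sq_le_sq_sum_of_nonneg (s := Finset.univ) fun i _ => abs_nonneg (x i)

theorem EuclideanSpace.sum_abs_le_sqrt_card_mul_norm (x : EuclideanSpace ℝ ι) :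
    ∑ i, |x i| ≤ √(Fintype.card ι) * ‖x‖ := by
  simpa [EuclideanSpace.norm_eq] using
    Real.sum_mul_le_sqrt_mul_sqrt Finset.univ (fun _ => (1 : ℝ)) (fun i => |x i|)

end Euclidean

section Spectral

variable {E F : Type*} [NormedAddCommGroup E] [InnerProductSpace ℝ E] [FiniteDimensional ℝ E]
  [NormedAddCommGroup F] [InnerProductSpace ℝ F] [FiniteDimensional ℝ F]

theorem LinearMap.mul_norm_le_norm_apply_of_mem_orthogonal_ker (T : E →ₗ[ℝ] F) {σ : ℝ}
    (hμ : ∀ μ : ℝ, 0 < μ → End.HasEigenvalue (adjoint T ∘ₗ T) μ → σ ^ 2 ≤ μ)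
    {z : E} (hz : z ∈ (ker T)ᗮ) : σ * ‖z‖ ≤ ‖T z‖ := by
  have hS := T.isSymmetric_adjoint_comp_self
  set b := hS.eigenvectorBasis rfl
  set μ := hS.eigenvalues rfl
  have hterm : ∀ i, σ ^ 2 * b.repr z i ^ 2 ≤ μ i * b.repr z i ^ 2 := by
    intro i
    rcases (T.isPositive_adjoint_comp_self.nonneg_eigenvalues rfl i).lt_or_eq with hpos | hzero
    · gcongr
      exact hμ _ hpos (hS.hasEigenvalue_eigenvalues rfl i)
    · have hbi : b i ∈ ker T := by
        rw [← ker_adjoint_comp_self, mem_ker, hS.apply_eigenvectorBasis, ← hzero]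
        simp
      simp [b.repr_apply_apply, Submodule.inner_right_of_mem_orthogonal hbi hz]
  have hz2 : ‖z‖ ^ 2 = ∑ i, b.repr z i ^ 2 := by
    rw [← b.repr.norm_map, EuclideanSpace.norm_eq, Real.sq_sqrt (by positivity)]
    simp
  have hTz2 : ‖T z‖ ^ 2 = ∑ i, μ i * b.repr z i ^ 2 := by
    calc ‖T z‖ ^ 2 = ⟪(adjoint T ∘ₗ T) z, z⟫_ℝ := by
          rw [comp_apply, adjoint_inner_left, real_inner_self_eq_norm_sq]
      _ = ⟪b.repr ((adjoint T ∘ₗ T) z), b.repr z⟫_ℝ := (b.repr.inner_map_map _ _).symm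
      _ = ∑ i, μ i * b.repr z i ^ 2 := by
          simp only [PiLp.inner_apply, hS.eigenvectorBasis_apply_self_apply, b, μ]
          exact Finset.sum_congr rfl fun i _ => by simp; ring
  refine le_of_pow_le_pow_left₀ two_ne_zero (norm_nonneg _) ?_
  rw [mul_pow, hz2, hTz2, Finset.mul_sum]
  exact Finset.sum_le_sum fun i _ => hterm i

end Spectral

section Adjoint

variable {𝕜 E : Type*} [RCLike 𝕜] [NormedAddCommGroup E] [InnerProductSpace 𝕜 E]
  [FiniteDimensional 𝕜 E]

theorem LinearMap.finrank_ker_adjoint (f : E →ₗ[𝕜] E) :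
    finrank 𝕜 (ker (adjoint f)) = finrank 𝕜 (ker f) := by
  have h₁ := (range f).finrank_add_finrank_orthogonal
  have h₂ := f.finrank_range_add_finrank_ker
  rw [orthogonal_range] at h₁
  omega

end Adjoint

theorem Matrix.toEuclideanLin_transpose_eq_adjoint {m ι : Type*} [Fintype m] [Fintype ι]
    [DecidableEq m] [DecidableEq ι] (A : Matrix m ι ℝ) :
    toEuclideanLin Aᵀ = adjoint (toEuclideanLin A) := by
  rw [← toEuclideanLin_conjTranspose_eq_adjoint, conjTranspose_eq_transpose_of_trivial]

section SingularValue

variable {n : ℕ} {A : Matrix (Fin n) (Fin n) ℝ} {σ : ℝ}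

theorem IsSmallestPosSingularValue.sq_le_of_hasEigenvalue (hσ : IsSmallestPosSingularValue A σ)
    {μ : ℝ} (hμ : 0 < μ) (hev : End.HasEigenvalue (toEuclideanLin (A * Aᵀ)) μ) : σ ^ 2 ≤ μ := by
  obtain ⟨x, hx⟩ := hev.exists_hasEigenvector
  have hsing : IsSingularValue A √μ := by
    refine ⟨Real.sqrt_nonneg μ, WithLp.ofLp x, fun h => hx.2 ((WithLp.ofLp_eq_zero 2).1 h), ?_⟩
    rw [Real.sq_sqrt hμ.le, ← mulVec_transpose, transpose_mul, transpose_transpose]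
    exact congrArg WithLp.ofLp hx.apply_eq_smul
  calc σ ^ 2 ≤ √μ ^ 2 := pow_le_pow_left₀ hσ.1.le (hσ.2.2 _ (Real.sqrt_pos.2 hμ) hsing) 2
    _ = μ := Real.sq_sqrt hμ.le

theorem IsSmallestPosSingularValue.mul_norm_le (hσ : IsSmallestPosSingularValue A σ)
    {z : EuclideanSpace ℝ (Fin n)} (hz : z ∈ (ker (toEuclideanLin Aᵀ))ᗮ) :
    σ * ‖z‖ ≤ ‖toEuclideanLin Aᵀ z‖ := by
  refine (toEuclideanLin Aᵀ).mul_norm_le_norm_apply_of_mem_orthogonal_ker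
    (fun μ hμ hev => hσ.sq_le_of_hasEigenvalue hμ ?_) hz
  rwa [← toEuclideanLin_conjTranspose_eq_adjoint, conjTranspose_eq_transpose_of_trivial,
    transpose_transpose, ← toLpLin_mul_same] at hev

end SingularValue

section Stationary

variable {n : ℕ} {P : Matrix (Fin n) (Fin n) ℝ} {π : Fin n → ℝ}

theorem IsProbVec.toLp_ne_zero (hπ : IsProbVec π) : WithLp.toLp 2 π ≠ 0 := by
  intro h
  have h0 : π = 0 := congrArg WithLp.ofLp h
  simpa [h0] using hπ.2

theorem IsProbVec.norm_toLp_le_one (hπ : IsProbVec π) : ‖WithLp.toLp 2 π‖ ≤ 1 := by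
  refine (EuclideanSpace.norm_le_sum_abs _).trans_eq ?_
  simp [abs_of_nonneg (hπ.1 _), hπ.2]

theorem IsStochastic.ker_toEuclideanLin_transpose_one_sub (hP : IsStochastic P)
    (hirr : MCIrreducible P) (hπ : IsProbVec π) (hstat : π ᵥ* P = π) :
    ker (toEuclideanLin (1 - P)ᵀ) = span ℝ {WithLp.toLp 2 π} := by
  have hright : ker (toEuclideanLin (1 - P)) ≤ span ℝ {WithLp.toLp 2 (fun _ => (1 : ℝ))} := by
    intro x hx
    have hPx : P *ᵥ WithLp.ofLp x = WithLp.ofLp x := by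
      have := congrArg WithLp.ofLp (mem_ker.1 hx)
      simp only [toLpLin_apply, sub_mulVec, one_mulVec] at this
      exact (sub_eq_zero.1 this).symm
    obtain ⟨c, hc⟩ := hP.eq_const_of_mulVec_eq_self hirr hPx
    refine Submodule.mem_span_singleton.2 ⟨c, ?_⟩
    ext i
    simp [hc]
  have hfin : finrank ℝ (ker (toEuclideanLin (1 - P)ᵀ)) ≤ 1 := by
    rw [toEuclideanLin_transpose_eq_adjoint, finrank_ker_adjoint]
    exact (Submodule.finrank_mono hright).trans (finrank_span_le_card _)
  have hmem : WithLp.toLp 2 π ∈ ker (toEuclideanLin (1 - P)ᵀ) := by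
    rw [mem_ker, toLpLin_apply, mulVec_transpose, vecMul_sub, vecMul_one, hstat, sub_self]
    rfl
  refine (Submodule.eq_of_le_of_finrank_le (Submodule.span_singleton_le_iff_mem _ _ |>.2 hmem)
    ?_).symm
  rwa [finrank_span_singleton hπ.toLp_ne_zero]

end Stationary

theorem mul_norm_le_of_sum_eq_zero {n : ℕ} {F : Type*} [NormedAddCommGroup F] [Module ℝ F]
    {T : EuclideanSpace ℝ (Fin n) →ₗ[ℝ] F} {π : Fin n → ℝ} (hπ : IsProbVec π)
    (hker : ker T = span ℝ {WithLp.toLp 2 π}) {σ : ℝ} (hσ : 0 ≤ σ)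
    (hT : ∀ z ∈ (ker T)ᗮ, σ * ‖z‖ ≤ ‖T z‖) {v : EuclideanSpace ℝ (Fin n)}
    (hv : ∑ i, v i = 0) : σ * ‖v‖ ≤ (√n + 1) * ‖T v‖ := by
  obtain ⟨k, hk, z, hz, rfl⟩ := (ker T).exists_add_mem_mem_orthogonal v
  obtain ⟨c, rfl⟩ := mem_span_singleton.1 (hker ▸ hk)
  have hc : c = -∑ i, z i := by
    simp only [PiLp.add_apply, PiLp.smul_apply, smul_eq_mul, Finset.sum_add_distrib,
      ← Finset.mul_sum, hπ.2, mul_one] at hv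
    linarith
  have hk_norm : ‖c • WithLp.toLp 2 π‖ ≤ √n * ‖z‖ :=
    calc ‖c • WithLp.toLp 2 π‖ ≤ |c| := by
          rw [norm_smul, Real.norm_eq_abs]
          exact mul_le_of_le_one_right (abs_nonneg c) hπ.norm_toLp_le_one
      _ ≤ ∑ i, |z i| := by rw [hc, abs_neg]; exact Finset.abs_sum_le_sum_abs _ _
      _ ≤ √n * ‖z‖ := by simpa using EuclideanSpace.sum_abs_le_sqrt_card_mul_norm z
  calc σ * ‖c • WithLp.toLp 2 π + z‖ ≤ σ * (√n * ‖z‖ + ‖z‖) := by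
        gcongr
        exact (norm_add_le _ _).trans (by linarith)
    _ = (√n + 1) * (σ * ‖z‖) := by ring
    _ ≤ (√n + 1) * ‖T (c • WithLp.toLp 2 π + z)‖ := by
        rw [map_add, mem_ker.1 hk, zero_add]
        gcongr
        exact hT z hz

section Interpolation

variable {n : ℕ} {P₀ P₁ : Matrix (Fin n) (Fin n) ℝ}

theorem vecMul_Pt (μ : Fin n → ℝ) (t : ℝ) :
    μ ᵥ* Pt P₀ P₁ t = (1 - t) • (μ ᵥ* P₀) + t • (μ ᵥ* P₁) := by
  simp only [Pt, vecMul_add, vecMul_smul]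

theorem sub_vecMul_one_sub_of_stationary {s : ℝ} {πs π₀ : Fin n → ℝ}
    (hπs : πs ᵥ* Pt P₀ P₁ s = πs) (hπ₀ : π₀ ᵥ* P₀ = π₀) :
    (πs - π₀) ᵥ* (1 - P₀) = s • (πs ᵥ* P₁ - πs ᵥ* P₀) := by
  rw [vecMul_Pt] at hπs
  rw [sub_vecMul, vecMul_sub, vecMul_sub, vecMul_one, vecMul_one, hπ₀, sub_self, sub_zero]
  nth_rewrite 1 [← hπs]
  module

theorem IsProbVec.sum_abs_vecMul_sub_vecMul_le {μ : Fin n → ℝ} (hμ : IsProbVec μ)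
    (hP₀ : IsStochastic P₀) (hP₁ : IsStochastic P₁) :
    ∑ i, |(μ ᵥ* P₁ - μ ᵥ* P₀) i| ≤ 2 := by
  have h₀ := hμ.vecMul_s7 hP₀
  have h₁ := hμ.vecMul_s7 hP₁
  calc ∑ i, |(μ ᵥ* P₁ - μ ᵥ* P₀) i| ≤ ∑ i, ((μ ᵥ* P₁) i + (μ ᵥ* P₀) i) :=
        Finset.sum_le_sum fun i _ => (abs_sub _ _).trans_eq <| by
          rw [abs_of_nonneg (h₁.1 i), abs_of_nonneg (h₀.1 i)]
    _ = 2 := by rw [Finset.sum_add_distrib, h₁.2, h₀.2]; norm_num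

end Interpolation

theorem tvDist_nonneg {n : ℕ} (μ ν : Fin n → ℝ) : 0 ≤ tvDist μ ν := by
  unfold tvDist
  positivity

theorem tvDist_stationary_le {n : ℕ} {P₀ P₁ : Matrix (Fin n) (Fin n) ℝ}
    (hP₀ : IsStochastic P₀) (hP₀i : MCIrreducible P₀) (hP₁ : IsStochastic P₁)
    {σ : ℝ} (hσ : IsSmallestPosSingularValue (1 - P₀) σ) {s : ℝ} (hs : 0 ≤ s)
    {πs π₀ : Fin n → ℝ} (hπs : IsProbVec πs ∧ πs ᵥ* Pt P₀ P₁ s = πs)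
    (hπ₀ : IsProbVec π₀ ∧ π₀ ᵥ* P₀ = π₀) :
    tvDist πs π₀ ≤ (n + √n) / σ * s := by
  set v := WithLp.toLp 2 (πs - π₀)
  set T := toEuclideanLin (1 - P₀)ᵀ
  have hv : ∑ i, v i = 0 := by simp [v, Finset.sum_sub_distrib, hπs.1.2, hπ₀.1.2]
  have hTv : ‖T v‖ ≤ 2 * s := by
    have hTv_eq : T v = WithLp.toLp 2 (s • (πs ᵥ* P₁ - πs ᵥ* P₀)) := by
      rw [← sub_vecMul_one_sub_of_stationary hπs.2 hπ₀.2, ← mulVec_transpose]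
      rfl
    refine (EuclideanSpace.norm_le_sum_abs _).trans ?_
    simp only [hTv_eq, PiLp.toLp_apply, Pi.smul_apply, smul_eq_mul, abs_mul, abs_of_nonneg hs,
      ← Finset.mul_sum]
    linarith [mul_le_mul_of_nonneg_left (hπs.1.sum_abs_vecMul_sub_vecMul_le hP₀ hP₁) hs]
  have hσv : σ * ‖v‖ ≤ (√n + 1) * ‖T v‖ :=
    mul_norm_le_of_sum_eq_zero hπ₀.1 (hP₀.ker_toEuclideanLin_transpose_one_sub hP₀i hπ₀.1 hπ₀.2)
      hσ.1.le (fun z hz => hσ.mul_norm_le hz) hv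
  have hσ₀ := hσ.1
  calc tvDist πs π₀ = 1 / 2 * ∑ i, |v i| := rfl
    _ ≤ 1 / 2 * (√n * ‖v‖) := by
        gcongr
        simpa using EuclideanSpace.sum_abs_le_sqrt_card_mul_norm v
    _ ≤ 1 / 2 * (√n * ((√n + 1) * (2 * s) / σ)) := by
        gcongr
        rw [le_div_iff₀ hσ₀]
        linarith [mul_le_mul_of_nonneg_left hTv (by positivity : (0 : ℝ) ≤ √n + 1)]
    _ = (n + √n) / σ * s := by
        field_simp
        linear_combination s * Real.mul_self_sqrt (Nat.cast_nonneg (α := ℝ) n)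

theorem add_sqrt_le_two_mul_rpow_three_halves {x : ℝ} (hx : 1 ≤ x) :
    x + √x ≤ 2 * x ^ ((3 : ℝ) / 2) := by
  have hx_pow : x ^ ((3 : ℝ) / 2) = x * √x := by
    rw [show (3 : ℝ) / 2 = 1 + 1 / 2 by norm_num, Real.rpow_add (by linarith), Real.rpow_one,
      Real.sqrt_eq_rpow]
  have hsqrt : 1 ≤ √x := Real.one_le_sqrt.2 hx
  rw [hx_pow]
  nlinarith

theorem stmt_7_general {n : ℕ} (hn : 1 ≤ n) (P₀ P₁ : Matrix (Fin n) (Fin n) ℝ)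
    (hP₀ : IsStochastic P₀) (hP₀i : MCIrreducible P₀)
    (hP₁ : IsStochastic P₁)
    (π : ℝ → Fin n → ℝ)
    (hπ : ∀ t ∈ Set.Icc (0 : ℝ) 1, IsProbVec (π t) ∧ (π t) ᵥ* (Pt P₀ P₁ t) = π t)
    (σ : ℝ) (hσ : IsSmallestPosSingularValue (1 - P₀) σ) :
    (∀ ε : ℝ, 0 < ε → ∀ s ∈ Set.Icc (0 : ℝ) 1,
        s ≤ ε * σ / (2 * (n : ℝ) ^ ((3 : ℝ) / 2)) → tvDist (π s) (π 0) ≤ ε) ∧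
    Filter.Tendsto (fun s => tvDist (π s) (π 0))
      (nhdsWithin 0 (Set.Icc (0 : ℝ) 1)) (nhds 0) := by
  have hπ₀ : IsProbVec (π 0) ∧ π 0 ᵥ* P₀ = π 0 := by
    simpa [Pt] using hπ 0 ⟨le_rfl, zero_le_one⟩
  have hbound : ∀ s ∈ Set.Icc (0 : ℝ) 1, tvDist (π s) (π 0) ≤ (n + √n) / σ * s :=
    fun s hs => tvDist_stationary_le hP₀ hP₀i hP₁ hσ hs.1 (hπ s hs) hπ₀
  have hσ₀ := hσ.1
  have hn' : (1 : ℝ) ≤ n := by exact_mod_cast hn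
  refine ⟨fun ε hε s hs hsδ => (hbound s hs).trans ?_, ?_⟩
  · calc (n + √n) / σ * s ≤ (n + √n) / σ * (ε * σ / (2 * (n : ℝ) ^ ((3 : ℝ) / 2))) := by
          gcongr
      _ = ε * ((n + √n) / (2 * (n : ℝ) ^ ((3 : ℝ) / 2))) := by field_simp
      _ ≤ ε := mul_le_of_le_one_right hε.le <|
          (div_le_one (by positivity)).2 (add_sqrt_le_two_mul_rpow_three_halves hn')
  · refine squeeze_zero' (Filter.Eventually.of_forall fun s => tvDist_nonneg _ _)
      (eventually_nhdsWithin_of_forall hbound) ?_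
    have hlin : Filter.Tendsto (fun s : ℝ => (n + √n) / σ * s) (nhds 0) (nhds 0) := by
      simpa using (continuous_const_mul ((n + √n) / σ)).tendsto 0
    exact hlin.mono_left nhdsWithin_le_nhds

/-- With σ the smallest nonzero singular value of I − P₀: for every ε > 0,
taking δ = εσ/(2 n^{3/2}), every s ∈ [0,1] with s ≤ δ satisfies
`‖π_s − π₀‖_TV ≤ ε`; in particular s ↦ π_s is continuous at s = 0 in total variation. -/
theorem stmt_7 {n : ℕ} (hn : 1 ≤ n) (P₀ P₁ : Matrix (Fin n) (Fin n) ℝ)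
    (hP₀ : IsStochastic P₀) (hP₀i : MCIrreducible P₀) (hP₀a : MCAperiodic P₀)
    (hP₁ : IsStochastic P₁) (hP₁i : MCIrreducible P₁) (hP₁a : MCAperiodic P₁)
    (π : ℝ → Fin n → ℝ)
    (hπ : ∀ t ∈ Set.Icc (0 : ℝ) 1, IsProbVec (π t) ∧ (π t) ᵥ* (Pt P₀ P₁ t) = π t)
    (σ : ℝ) (hσ : IsSmallestPosSingularValue (1 - P₀) σ) :
    (∀ ε : ℝ, 0 < ε → ∀ s ∈ Set.Icc (0 : ℝ) 1,
        s ≤ ε * σ / (2 * (n : ℝ) ^ ((3 : ℝ) / 2)) → tvDist (π s) (π 0) ≤ ε) ∧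
    Filter.Tendsto (fun s => tvDist (π s) (π 0))
      (nhdsWithin 0 (Set.Icc (0 : ℝ) 1)) (nhds 0) :=
  stmt_7_general hn P₀ P₁ hP₀ hP₀i hP₁ π hπ σ hσ
end
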